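/- arXiv:0805.3418 — 5 statements merged into one kernel-verified Lean document; each statement's English description precedes it below -/
import Mathlib

section
/- For every integer n ≥ 1 and every real t with t² ≤ n one has 0 ≤ e^{−t²/2} − (1 − t²/(2n))^n ≤ (3 t⁴/(8n)) e^{−t²/2}. -/
lemma aux_pow_sub_pow_le {a b : ℝ} (hb : 0 ≤ b) (hba : b ≤ a) (n : ℕ) :
    a ^ n - b ^ n ≤ n * a ^ (n - 1) * (a - b) := by
  have ha0 : 0 ≤ a := hb.trans hba
  have key : a ^ n - b ^ n = (∑ i ∈ Finset.range n, a ^ i * b ^ (n - 1 - i)) * (a - b) :=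
    (geom_sum₂_mul a b n).symm
  rw [key]
  have hsum : (∑ i ∈ Finset.range n, a ^ i * b ^ (n - 1 - i)) ≤ n * a ^ (n - 1) := by
    calc (∑ i ∈ Finset.range n, a ^ i * b ^ (n - 1 - i))
        ≤ ∑ i ∈ Finset.range n, a ^ (n - 1) := by
          apply Finset.sum_le_sum
          intro i hi
          have hi' : i < n := Finset.mem_range.mp hi
          have h1 : a ^ i * b ^ (n - 1 - i) ≤ a ^ i * a ^ (n - 1 - i) :=
            mul_le_mul_of_nonneg_left (pow_le_pow_left₀ hb hba _) (pow_nonneg ha0 i)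
          have h2 : a ^ i * a ^ (n - 1 - i) = a ^ (n - 1) := by
            rw [← pow_add]; congr 1; omega
          linarith
      _ = n * a ^ (n - 1) := by
          rw [Finset.sum_const, Finset.card_range, nsmul_eq_mul]
  exact mul_le_mul_of_nonneg_right hsum (by linarith)

/-- An elementary real inequality comparing the `n`-th power of `1 − t²/(2n)` with
`e^{−t²/2}`, valid for `t² ≤ n`. -/
theorem stmt_4 (n : ℕ) (hn : 1 ≤ n) (t : ℝ) (ht : t ^ 2 ≤ (n : ℝ)) :
    0 ≤ Real.exp (-t ^ 2 / 2) - (1 - t ^ 2 / (2 * n)) ^ n ∧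
      Real.exp (-t ^ 2 / 2) - (1 - t ^ 2 / (2 * n)) ^ n ≤
        3 * t ^ 4 / (8 * n) * Real.exp (-t ^ 2 / 2) := by
  have hn' : (0:ℝ) < n := by exact_mod_cast hn
  set x : ℝ := t ^ 2 / (2 * n) with hxdef
  have hx0 : 0 ≤ x := by positivity
  have hx2 : x ≤ 1 / 2 := by
    rw [hxdef, div_le_iff₀ (by positivity)]; linarith
  have hb0 : (0:ℝ) ≤ 1 - x := by linarith
  have hab : 1 - x ≤ Real.exp (-x) := Real.one_sub_le_exp_neg x
  have ha0 : (0:ℝ) ≤ Real.exp (-x) := (Real.exp_pos _).le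
  have hexp : Real.exp (-t ^ 2 / 2) = Real.exp (-x) ^ n := by
    rw [← Real.exp_nat_mul]
    congr 1
    rw [hxdef]; field_simp
  have hlow : (1 - x) ^ n ≤ Real.exp (-x) ^ n := pow_le_pow_left₀ hb0 hab n
  -- quadratic bound : exp(-x) - (1-x) ≤ x^2/2
  have hquad : Real.exp (-x) - (1 - x) ≤ x ^ 2 / 2 := by
    have h1 : 1 + x + x ^ 2 / 2 ≤ Real.exp x := Real.quadratic_le_exp_of_nonneg hx0
    have hp : (0:ℝ) < 1 + x + x ^ 2 / 2 := by positivity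
    have h3 : Real.exp (-x) ≤ 1 / (1 + x + x ^ 2 / 2) := by
      rw [Real.exp_neg, ← one_div]
      exact one_div_le_one_div_of_le hp h1
    have h4 : 1 / (1 + x + x ^ 2 / 2) ≤ 1 - x + x ^ 2 / 2 := by
      rw [div_le_iff₀ hp]
      nlinarith [sq_nonneg (x ^ 2), sq_nonneg x]
    linarith
  have hdiff : Real.exp (-x) ^ n - (1 - x) ^ n ≤
      n * Real.exp (-x) ^ (n - 1) * (Real.exp (-x) - (1 - x)) :=
    aux_pow_sub_pow_le hb0 hab n
  -- rewrite a^(n-1) = a^n * exp x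
  have hpow : Real.exp (-x) ^ (n - 1) = Real.exp (-x) ^ n * Real.exp x := by
    have h5 : Real.exp (-x) ^ n = Real.exp (-x) ^ (n - 1) * Real.exp (-x) := by
      conv_lhs => rw [show n = (n - 1) + 1 by omega]
      rw [pow_succ]
    rw [h5, mul_assoc, ← Real.exp_add]
    simp
  have hexpx3 : Real.exp x ≤ 3 := by
    have := Real.exp_one_lt_d9
    have h6 : Real.exp x ≤ Real.exp 1 := Real.exp_le_exp.mpr (by linarith)
    linarith
  have hkey : Real.exp (-x) ^ n - (1 - x) ^ n ≤
      3 / 2 * n * x ^ 2 * Real.exp (-x) ^ n := by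
    have han : (0:ℝ) ≤ Real.exp (-x) ^ n := pow_nonneg ha0 n
    have step1 : n * Real.exp (-x) ^ (n - 1) * (Real.exp (-x) - (1 - x)) ≤
        n * Real.exp (-x) ^ (n - 1) * (x ^ 2 / 2) := by
      apply mul_le_mul_of_nonneg_left hquad
      positivity
    have step2 : n * Real.exp (-x) ^ (n - 1) * (x ^ 2 / 2) =
        n * x ^ 2 / 2 * Real.exp x * Real.exp (-x) ^ n := by
      rw [hpow]; ring
    have step3 : n * x ^ 2 / 2 * Real.exp x * Real.exp (-x) ^ n ≤
        3 / 2 * n * x ^ 2 * Real.exp (-x) ^ n := by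
      have : n * x ^ 2 / 2 * Real.exp x ≤ 3 / 2 * n * x ^ 2 := by
        have hnn : (0:ℝ) ≤ (n:ℝ) * x ^ 2 := by positivity
        nlinarith [mul_le_mul_of_nonneg_left hexpx3 hnn]
      exact mul_le_mul_of_nonneg_right this han
    linarith
  have hrhs : 3 * t ^ 4 / (8 * n) = 3 / 2 * n * x ^ 2 := by
    rw [hxdef]; field_simp; ring
  constructor
  · rw [hexp]; linarith
  · rw [hexp, hrhs]; linarith
end

section
/- Let τ ∈ (0,1]. Let J be an open interval containing 0 and λ : J → ℂ a continuous function such that λ(u) = 1 − u²/2 + o(u²) as u → 0. Suppose there exist C > 0 and an integer N ≥ 1 such that for every real t with |t| ≤ 1 and every integer n ≥ N with t/√n ∈ J one has |λ(t/√n)^n − e^{−t²/2}| ≤ C (|t|/√n)^τ. Then λ(u) = 1 − u²/2 + O(|u|^{2+τ}) as u → 0, i.e. there exist C' > 0 and η > 0 such that |λ(u) − 1 + u²/2| ≤ C' |u|^{2+τ} for every u ∈ J with |u| ≤ η. -/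
/-!
For small `u ≠ 0` take `n = ⌊1 / u²⌋₊` and `t = u √n`, so that `|t| ≤ 1` and `t / √n = u`. The
hypothesis then says that `λ(u)ⁿ` is within `C |u|^τ` of `rⁿ`, where `r = exp (-u² / 2)`. Both
`λ(u)` and `r` are `1 - u² / 2 + o(u²)` and `n u² ≤ 1`, so `(λ(u)ⁿ - rⁿ) / (λ(u) - r)` has modulus
of order `n ≈ u⁻²`; hence `|λ(u) - r| = O(u² |u|^τ)`, and `r = 1 - u² / 2 + O(u⁴)`.
-/

open Asymptotics

theorem norm_pow_sub_pow_le {R : Type*} [NormedCommRing R] [NormOneClass R] {a b : R} {M : ℝ}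
    (ha : ‖a‖ ≤ M) (hb : ‖b‖ ≤ M) (n : ℕ) :
    ‖a ^ n - b ^ n‖ ≤ n * M ^ (n - 1) * ‖a - b‖ := by
  have hM : 0 ≤ M := (norm_nonneg a).trans ha
  have hterm : ∀ i ∈ Finset.range n, ‖a ^ i * b ^ (n - 1 - i)‖ ≤ M ^ (n - 1) := by
    intro i hi
    have hi : i + (n - 1 - i) = n - 1 := by grind
    calc ‖a ^ i * b ^ (n - 1 - i)‖ ≤ ‖a‖ ^ i * ‖b‖ ^ (n - 1 - i) :=
          (norm_mul_le _ _).trans (by gcongr <;> exact norm_pow_le _ _)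
      _ ≤ M ^ i * M ^ (n - 1 - i) := by gcongr
      _ = M ^ (n - 1) := by rw [← pow_add, hi]
  calc ‖a ^ n - b ^ n‖
      ≤ ‖∑ i ∈ Finset.range n, a ^ i * b ^ (n - 1 - i)‖ * ‖a - b‖ := by
        rw [← geom_sum₂_mul]; exact norm_mul_le _ _
    _ ≤ n * M ^ (n - 1) * ‖a - b‖ := by
        gcongr
        refine (norm_sum_le _ _).trans ?_
        simpa using Finset.sum_le_card_nsmul _ _ _ hterm

theorem one_add_pow_le_two {x : ℝ} {m : ℕ} (hx : 0 ≤ x) (hmx : m * x ≤ 1 / 2) :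
    (1 + x) ^ m ≤ 2 :=
  calc (1 + x) ^ m ≤ Real.exp x ^ m := by
        gcongr; linarith [Real.add_one_le_exp x]
    _ = Real.exp (m * x) := (Real.exp_nat_mul x m).symm
    _ ≤ 1 / (1 - m * x) := Real.exp_bound_div_one_sub_of_interval (by positivity) (by linarith)
    _ ≤ 2 := by rw [div_le_iff₀ (by linarith)]; linarith

/-- `aⁿ - bⁿ = S (a - b)` where the geometric sum `S = ∑ aⁱ bⁿ⁻¹⁻ⁱ` stays within `n / 4` of
`n bⁿ⁻¹`, so `‖S‖ ≥ n / 4`. -/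
theorem mul_norm_sub_le_norm_pow_sub_pow {𝕜 : Type*} [RCLike 𝕜] {a b : 𝕜} {n : ℕ}
    (hb : ‖b‖ ≤ 1) (hbn : 1 / 2 ≤ ‖b‖ ^ (n - 1)) (hab : n * ‖a - b‖ ≤ 1 / 8) :
    n * ‖a - b‖ ≤ 4 * ‖a ^ n - b ^ n‖ := by
  set δ := ‖a - b‖
  set S := ∑ i ∈ Finset.range n, a ^ i * b ^ (n - 1 - i)
  have hδ : 0 ≤ δ := norm_nonneg _
  have hM : (1 + δ) ^ (n - 1) ≤ 2 := by
    refine one_add_pow_le_two hδ ?_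
    have : ((n - 1 : ℕ) : ℝ) ≤ n := by exact_mod_cast Nat.sub_le n 1
    nlinarith
  have ha : ‖a‖ ≤ 1 + δ := by linarith [norm_le_norm_add_norm_sub' a b]
  have hterm : ∀ i ∈ Finset.range n, ‖(a ^ i - b ^ i) * b ^ (n - 1 - i)‖ ≤ n * 2 * δ := by
    intro i hi
    have hi : i < n := Finset.mem_range.1 hi
    have hbi : ‖b ^ (n - 1 - i)‖ ≤ 1 := by rw [norm_pow]; exact pow_le_one₀ (norm_nonneg _) hb
    calc ‖(a ^ i - b ^ i) * b ^ (n - 1 - i)‖ ≤ ‖a ^ i - b ^ i‖ := by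
          rw [norm_mul]; exact mul_le_of_le_one_right (norm_nonneg _) hbi
      _ ≤ i * (1 + δ) ^ (i - 1) * δ := norm_pow_sub_pow_le ha (by linarith) i
      _ ≤ n * 2 * δ := by
          gcongr
          exact (pow_le_pow_right₀ (by linarith) (by omega)).trans hM
  have hdev : ‖S - n * b ^ (n - 1)‖ ≤ n / 4 := by
    have hsplit :
        S - n * b ^ (n - 1) = ∑ i ∈ Finset.range n, (a ^ i - b ^ i) * b ^ (n - 1 - i) := by
      have : ∀ i ∈ Finset.range n, b ^ i * b ^ (n - 1 - i) = b ^ (n - 1) := fun i hi => by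
        rw [← pow_add]; congr 1; grind
      simp only [sub_mul, Finset.sum_sub_distrib, Finset.sum_congr rfl this, Finset.sum_const,
        Finset.card_range, nsmul_eq_mul, S]
    calc ‖S - n * b ^ (n - 1)‖ ≤ n * (n * 2 * δ) := by
          rw [hsplit]
          refine (norm_sum_le _ _).trans ?_
          simpa using Finset.sum_le_card_nsmul _ _ _ hterm
      _ ≤ n / 4 := by nlinarith
  have hS : n / 4 ≤ ‖S‖ := by
    have hlead : ‖(n * b ^ (n - 1) : 𝕜)‖ = n * ‖b‖ ^ (n - 1) := by
      rw [norm_mul, norm_pow, RCLike.norm_natCast]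
    have := norm_sub_norm_le (n * b ^ (n - 1) : 𝕜) S
    rw [norm_sub_rev, hlead] at this
    nlinarith
  calc n * δ = 4 * (n / 4 * δ) := by ring
    _ ≤ 4 * (‖S‖ * δ) := by gcongr
    _ = 4 * ‖a ^ n - b ^ n‖ := by rw [← geom_sum₂_mul, norm_mul]

theorem exists_nat_gt_and_mul_le_one {x : ℝ} (hx : 0 < x) {N : ℕ} (hN : (N + 1) * x ≤ 1) :
    ∃ n : ℕ, N < n ∧ n * x ≤ 1 ∧ 1 ≤ 2 * n * x := by
  have hfloor : (N + 1 : ℕ) ≤ ⌊1 / x⌋₊ :=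
    Nat.le_floor (by rw [le_div_iff₀ hx]; exact_mod_cast hN)
  have hle : (⌊1 / x⌋₊ : ℝ) ≤ 1 / x := Nat.floor_le (by positivity)
  have hlt : 1 / x < ⌊1 / x⌋₊ + 1 := Nat.lt_floor_add_one _
  have hone : (1 : ℝ) ≤ ⌊1 / x⌋₊ := by exact_mod_cast (Nat.succ_pos N).trans_le hfloor
  refine ⟨⌊1 / x⌋₊, hfloor, (le_div_iff₀ hx).1 hle, ?_⟩
  rw [div_lt_iff₀ hx] at hlt
  nlinarith

theorem norm_sub_one_add_sq_div_two_le {𝕜 : Type*} [RCLike 𝕜] {τ C u : ℝ} {z : 𝕜} {n : ℕ}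
    (hτ : τ ≤ 2) (hu : |u| ≤ 1 / 2) (hnu : n * u ^ 2 ≤ 1) (hnu' : 1 ≤ 2 * n * u ^ 2)
    (hz : ‖z - 1 + (u : 𝕜) ^ 2 / 2‖ ≤ u ^ 2 / 16)
    (hpow : ‖z ^ n - (Real.exp (-u ^ 2 / 2) : 𝕜) ^ n‖ ≤ C * |u| ^ τ) :
    ‖z - 1 + (u : 𝕜) ^ 2 / 2‖ ≤ (8 * C + 1) * |u| ^ (2 + τ) := by
  set r := Real.exp (-u ^ 2 / 2)
  have hu0 : 0 < |u| := abs_pos.2 (by rintro rfl; norm_num at hnu')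
  have hu2 : u ^ 2 ≤ 1 / 4 := by nlinarith [sq_abs u, abs_nonneg u]
  have hr : ‖(r : 𝕜)‖ = r := by rw [RCLike.norm_ofReal, abs_of_pos (Real.exp_pos _)]
  have hr1 : r ≤ 1 := Real.exp_le_one_iff.2 (by nlinarith)
  have hrn : 1 / 2 ≤ r ^ (n - 1) := by
    have : ((n - 1 : ℕ) : ℝ) ≤ n := by exact_mod_cast Nat.sub_le n 1
    rw [← Real.exp_nat_mul]
    nlinarith [Real.add_one_le_exp ((n - 1 : ℕ) * (-u ^ 2 / 2)), sq_nonneg u]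
  have hrtaylor : ‖(r : 𝕜) - 1 + (u : 𝕜) ^ 2 / 2‖ ≤ u ^ 4 / 4 := by
    have := Real.abs_exp_sub_one_sub_id_le (x := -u ^ 2 / 2)
      (by rw [abs_le]; constructor <;> nlinarith)
    have hcast : (r : 𝕜) - 1 + (u : 𝕜) ^ 2 / 2 = ((r - 1 - (-u ^ 2 / 2) : ℝ) : 𝕜) := by
      push_cast; ring
    rw [hcast, RCLike.norm_ofReal]
    linarith
  have hzr : ‖z - r‖ ≤ u ^ 2 / 8 := by
    calc ‖z - r‖ = ‖(z - 1 + (u : 𝕜) ^ 2 / 2) - ((r : 𝕜) - 1 + (u : 𝕜) ^ 2 / 2)‖ := by ring_nf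
      _ ≤ u ^ 2 / 16 + u ^ 4 / 4 := (norm_sub_le _ _).trans (add_le_add hz hrtaylor)
      _ ≤ u ^ 2 / 8 := by nlinarith
  have hroot : n * ‖z - r‖ ≤ 4 * ‖z ^ n - (r : 𝕜) ^ n‖ :=
    mul_norm_sub_le_norm_pow_sub_pow (by rw [hr]; exact hr1) (by rwa [hr])
      (by nlinarith [norm_nonneg (z - r)])
  have hrpow : |u| ^ (2 + τ) = u ^ 2 * |u| ^ τ := by
    rw [Real.rpow_add hu0, Real.rpow_two, sq_abs]
  have hquartic : u ^ 4 ≤ |u| ^ (2 + τ) := by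
    calc u ^ 4 = |u| ^ ((4 : ℕ) : ℝ) := by
          rw [Real.rpow_natCast, pow_abs, abs_of_nonneg (by positivity)]
      _ ≤ |u| ^ (2 + τ) :=
          Real.rpow_le_rpow_of_exponent_ge hu0 (by linarith) (by push_cast; linarith)
  calc ‖z - 1 + (u : 𝕜) ^ 2 / 2‖ = ‖(z - r) + ((r : 𝕜) - 1 + (u : 𝕜) ^ 2 / 2)‖ := by ring_nf
    _ ≤ ‖z - r‖ + ‖(r : 𝕜) - 1 + (u : 𝕜) ^ 2 / 2‖ := norm_add_le _ _
    _ ≤ 2 * u ^ 2 * (n * ‖z - r‖) + u ^ 4 / 4 := by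
        gcongr
        nlinarith [norm_nonneg (z - r)]
    _ ≤ 2 * u ^ 2 * (4 * (C * |u| ^ τ)) + |u| ^ (2 + τ) :=
        add_le_add (mul_le_mul_of_nonneg_left (hroot.trans (by gcongr)) (by positivity))
          (by linarith [pow_nonneg (sq_nonneg u) 2])
    _ = (8 * C + 1) * |u| ^ (2 + τ) := by rw [hrpow]; ring

theorem stmt_5_general
    (τ : ℝ) (hτ1 : τ ≤ 1)
    (J : Set ℝ)
    (lam : ℝ → ℂ)
    (hexp : (fun u : ℝ => lam u - 1 + u ^ 2 / 2) =o[nhds 0] fun u : ℝ => u ^ 2)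
    (C : ℝ) (hC : 0 < C) (N : ℕ)
    (hmaj : ∀ t : ℝ, |t| ≤ 1 → ∀ n : ℕ, N ≤ n → t / Real.sqrt n ∈ J →
      ‖lam (t / Real.sqrt n) ^ n - Real.exp (-t ^ 2 / 2)‖
        ≤ C * (|t| / Real.sqrt n) ^ τ) :
    ∃ C' > (0 : ℝ), ∃ η > (0 : ℝ), ∀ u ∈ J, |u| ≤ η →
      ‖lam u - 1 + u ^ 2 / 2‖ ≤ C' * |u| ^ (2 + τ) := by
  obtain ⟨η, hη, hsmall⟩ :=
    Metric.eventually_nhds_iff.1 (hexp.def (by norm_num : (0 : ℝ) < 1 / 16))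
  refine ⟨8 * C + 1, by positivity, min (η / 2) (1 / (2 * (N + 1))), by positivity,
    fun u huJ hu => ?_⟩
  have huN : |u| ≤ 1 / (2 * (N + 1)) := hu.trans (min_le_right _ _)
  have hlam : ‖lam u - 1 + u ^ 2 / 2‖ ≤ u ^ 2 / 16 := by
    have := hsmall (y := u) (by rw [Real.dist_0_eq_abs]; linarith [hu.trans (min_le_left _ _)])
    rwa [norm_pow, Real.norm_eq_abs, sq_abs, one_div_mul_eq_div] at this
  rcases eq_or_ne u 0 with rfl | hu0
  · exact hlam.trans (by rw [zero_pow two_ne_zero, zero_div]; positivity)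
  have hu_half : |u| ≤ 1 / 2 := huN.trans (by gcongr; linarith [N.cast_nonneg (α := ℝ)])
  have hNu : (N + 1) * u ^ 2 ≤ 1 := by
    rw [le_div_iff₀ (by positivity)] at huN
    nlinarith [sq_abs u, abs_nonneg u]
  obtain ⟨n, hNn, hnu, hnu'⟩ := exists_nat_gt_and_mul_le_one (by positivity) hNu
  have hsqrt : 0 < √(n : ℝ) := Real.sqrt_pos.2 (by exact_mod_cast (N.zero_le.trans_lt hNn))
  have ht : |u * √n| ≤ 1 := by
    rw [← sq_le_one_iff_abs_le_one, mul_pow, Real.sq_sqrt n.cast_nonneg, mul_comm]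
    exact hnu
  have hpow := hmaj (u * √n) ht n hNn.le (by rwa [mul_div_cancel_right₀ _ hsqrt.ne'])
  rw [mul_div_cancel_right₀ _ hsqrt.ne', abs_mul, abs_of_pos hsqrt,
    mul_div_cancel_right₀ _ hsqrt.ne',
    show -(u * √n) ^ 2 / 2 = n * (-u ^ 2 / 2) by rw [mul_pow, Real.sq_sqrt n.cast_nonneg]; ring,
    Real.exp_nat_mul, Complex.ofReal_pow] at hpow
  exact norm_sub_one_add_sq_div_two_le (by linarith) hu_half hnu hnu' hlam hpow

/-- Scalar content of Lemma 4.2 of the paper: a second-order Taylor expansion with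
explicit error rate `O(|u|^{2+τ})` for the perturbed dominating eigenvalue `λ(·)`. -/
theorem stmt_5
    (τ : ℝ) (hτ : 0 < τ) (hτ1 : τ ≤ 1)
    (a b : ℝ) (ha : a < 0) (hb : 0 < b) (J : Set ℝ) (hJ : J = Set.Ioo a b)
    (lam : ℝ → ℂ) (hcont : ContinuousOn lam J)
    (hexp : (fun u : ℝ => lam u - 1 + u ^ 2 / 2) =o[nhds 0] fun u : ℝ => u ^ 2)
    (C : ℝ) (hC : 0 < C) (N : ℕ) (hN : 1 ≤ N)
    (hmaj : ∀ t : ℝ, |t| ≤ 1 → ∀ n : ℕ, N ≤ n → t / Real.sqrt n ∈ J →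
      ‖lam (t / Real.sqrt n) ^ n - Real.exp (-t ^ 2 / 2)‖
        ≤ C * (|t| / Real.sqrt n) ^ τ) :
    ∃ C' > (0 : ℝ), ∃ η > (0 : ℝ), ∀ u ∈ J, |u| ≤ η →
      ‖lam u - 1 + u ^ 2 / 2‖ ≤ C' * |u| ^ (2 + τ) :=
  stmt_5_general τ hτ1 J lam hexp C hC N hmaj
end

section
/- Assume A := ∫_G c(g)^{1/2} δ_λ(g)² dπ(g) < ∞ and B := ∫_G δ_λ(g)² dπ(g) < ∞. Then for every t ∈ ℝ, Q(t) maps L₁ into L₁, and for every f ∈ L₁ one has m₁(Q(t)f) ≤ A m₁(f) + 2 A C^{1/2} |t|^{1/2} |f|₁ and |Q(t)f|₁ ≤ B |f|₁. -/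
/-!
Along `g` the weight grows at most by `δ_λ(g)`: `p_λ(gx) ≤ δ_λ(g) p_λ(x)`, by the triangle
inequality through `gx₀` and subadditivity of the square root. For the Hölder quotient write
`e(gx) f(gx) - e(gy) f(gy) = e(gx) (f(gx) - f(gy)) + (e(gx) - e(gy)) f(gy)`, `e = e^{itξ}`,
and bound the phase difference by `2 |tξ(gx) - tξ(gy)|^{1/2}`, interpolating between the trivial
bound `2` and the Lipschitz bound; each term then carries `c(g)^{1/2} δ_λ(g)^2`, which
integrates to `A`.
-/

open MeasureTheory Complex

lemma Real.sqrt_add_le_sqrt_add_sqrt {a b : ℝ} (ha : 0 ≤ a) (hb : 0 ≤ b) :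
    √(a + b) ≤ √a + √b :=
  Real.sqrt_le_iff.2 ⟨by positivity, by
    nlinarith [Real.sq_sqrt ha, Real.sq_sqrt hb, Real.sqrt_nonneg a, Real.sqrt_nonneg b]⟩

lemma Complex.norm_exp_I_mul_ofReal_sub_le (x y : ℝ) :
    ‖exp (I * x) - exp (I * y)‖ ≤ 2 * √|x - y| := by
  have hfactor : exp (I * x) - exp (I * y) = exp (I * y) * (exp (I * ↑(x - y)) - 1) := by
    rw [mul_sub, mul_one, ← exp_add]; push_cast; ring_nf
  rw [hfactor, norm_mul, norm_exp_I_mul_ofReal, one_mul]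
  have hlin : ‖exp (I * ↑(x - y)) - 1‖ ≤ |x - y| := Real.norm_exp_I_mul_ofReal_sub_one_le
  have htwo : ‖exp (I * ↑(x - y)) - 1‖ ≤ 2 :=
    (norm_sub_le _ _).trans (by rw [norm_exp_I_mul_ofReal, norm_one]; norm_num)
  rcases le_total |x - y| 1 with hsmall | hlarge
  · have : |x - y| ≤ √|x - y| :=
      (Real.le_sqrt (abs_nonneg _) (abs_nonneg _)).2 (by nlinarith [abs_nonneg (x - y)])
    linarith [Real.sqrt_nonneg |x - y|]
  · linarith [Real.one_le_sqrt.2 hlarge]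

section Weights

variable {E : Type*} [PseudoMetricSpace E]

lemma one_add_mul_sqrt_dist_comp_le {φ : E → E} {k lam : ℝ} (hk : 0 ≤ k) (hlam : 0 ≤ lam)
    (hφ : ∀ x y, dist (φ x) (φ y) ≤ k * dist x y) (x₀ x : E) :
    1 + lam * √(dist (φ x) x₀) ≤
      (√(max k 1) + lam * √(dist (φ x₀) x₀)) * (1 + lam * √(dist x x₀)) := by
  have hsqrt : √(dist (φ x) x₀) ≤ √k * √(dist x x₀) + √(dist (φ x₀) x₀) :=
    calc √(dist (φ x) x₀) ≤ √(k * dist x x₀ + dist (φ x₀) x₀) :=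
          Real.sqrt_le_sqrt ((dist_triangle _ (φ x₀) _).trans (by linarith [hφ x x₀]))
      _ ≤ √(k * dist x x₀) + √(dist (φ x₀) x₀) :=
          Real.sqrt_add_le_sqrt_add_sqrt (by positivity) dist_nonneg
      _ = √k * √(dist x x₀) + √(dist (φ x₀) x₀) := by rw [Real.sqrt_mul hk]
  have hone : 1 ≤ √(max k 1) := Real.one_le_sqrt.2 (le_max_right _ _)
  have hk_le : √k * (lam * √(dist x x₀)) ≤ √(max k 1) * (lam * √(dist x x₀)) :=
    mul_le_mul_of_nonneg_right (Real.sqrt_le_sqrt (le_max_left _ _)) (by positivity)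
  have hcross : 0 ≤ lam * √(dist (φ x₀) x₀) * (lam * √(dist x x₀)) := by positivity
  nlinarith [mul_le_mul_of_nonneg_left hsqrt hlam]

lemma continuous_of_norm_sub_le_mul_sqrt_dist {F : Type*} [SeminormedAddCommGroup F]
    {f : E → F} {p : E → ℝ} (hp : Continuous p) {M : ℝ}
    (hf : ∀ x y, ‖f x - f y‖ ≤ M * √(dist x y) * p x * p y) : Continuous f := by
  refine continuous_iff_continuousAt.2 fun x => tendsto_iff_norm_sub_tendsto_zero.2 ?_
  refine squeeze_zero (fun _ => norm_nonneg _) (fun y => hf y x) ?_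
  simpa using (by fun_prop : Continuous fun y => M * √(dist y x) * p y * p x).tendsto x

end Weights

lemma norm_comp_le {E F : Type*} {φ : E → E} {D : ℝ} {p : E → ℝ} (hp : ∀ x, 0 ≤ p x)
    (hpφ : ∀ x, p (φ x) ≤ D * p x) [SeminormedAddCommGroup F] {f : E → F} {M : ℝ}
    (hM : 0 ≤ M) (hf : ∀ x, ‖f x‖ ≤ M * p x ^ 2) (x : E) :
    ‖f (φ x)‖ ≤ M * D ^ 2 * p x ^ 2 :=
  calc ‖f (φ x)‖ ≤ M * p (φ x) ^ 2 := hf _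
    _ ≤ M * (D * p x) ^ 2 := by gcongr; exacts [hp _, hpφ x]
    _ = M * D ^ 2 * p x ^ 2 := by ring

section Pointwise

variable {E : Type*} [PseudoMetricSpace E] {φ : E → E} {k D : ℝ} {p : E → ℝ}

lemma norm_comp_sub_le (hk : 0 ≤ k) (hφ : ∀ x y, dist (φ x) (φ y) ≤ k * dist x y)
    (hp : ∀ x, 0 ≤ p x) (hpφ : ∀ x, p (φ x) ≤ D * p x)
    {F : Type*} [SeminormedAddCommGroup F] {f : E → F} {M : ℝ} (hM : 0 ≤ M)
    (hf : ∀ x y, ‖f x - f y‖ ≤ M * √(dist x y) * p x * p y) (x y : E) :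
    ‖f (φ x) - f (φ y)‖ ≤ M * √k * D ^ 2 * √(dist x y) * p x * p y := by
  have hsqrt : √(dist (φ x) (φ y)) ≤ √k * √(dist x y) := by
    rw [← Real.sqrt_mul hk]; exact Real.sqrt_le_sqrt (hφ x y)
  have hDx : 0 ≤ D * p x := (hp _).trans (hpφ x)
  calc ‖f (φ x) - f (φ y)‖ ≤ M * √(dist (φ x) (φ y)) * p (φ x) * p (φ y) := hf _ _
    _ ≤ M * (√k * √(dist x y)) * (D * p x) * (D * p y) := by
        gcongr
        · exact hp _
        · exact hp _
        · exact hpφ x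
        · exact hpφ y
    _ = M * √k * D ^ 2 * √(dist x y) * p x * p y := by ring

lemma norm_exp_phase_comp_sub_mul_le (hk : 0 ≤ k)
    (hφ : ∀ x y, dist (φ x) (φ y) ≤ k * dist x y)
    (hp : ∀ x, 0 ≤ p x) (hpφ : ∀ x, p (φ x) ≤ D * p x)
    {θ : E → ℝ} {L : ℝ} (hL : 0 ≤ L) (hθ : ∀ x y, |θ x - θ y| ≤ L * dist x y)
    {f : E → ℂ} {M : ℝ} (hM : 0 ≤ M) (hf : ∀ x, ‖f x‖ ≤ M * p x ^ 2) {x y : E}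
    (hxy : p y ≤ p x) :
    ‖exp (I * θ (φ x)) - exp (I * θ (φ y))‖ * ‖f (φ y)‖ ≤
      2 * √L * M * √k * D ^ 2 * √(dist x y) * p x * p y := by
  have hexp : ‖exp (I * θ (φ x)) - exp (I * θ (φ y))‖ ≤
      2 * (√L * √k * √(dist x y)) :=
    calc _ ≤ 2 * √|θ (φ x) - θ (φ y)| := norm_exp_I_mul_ofReal_sub_le _ _
      _ ≤ 2 * √(L * (k * dist x y)) := by
          gcongr
          exact (hθ _ _).trans (mul_le_mul_of_nonneg_left (hφ x y) hL)
      _ = 2 * (√L * √k * √(dist x y)) := by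
          rw [Real.sqrt_mul hL, Real.sqrt_mul hk, mul_assoc √L]
  have hfy : ‖f (φ y)‖ ≤ M * D ^ 2 * p x * p y :=
    calc ‖f (φ y)‖ ≤ M * D ^ 2 * p y ^ 2 := norm_comp_le hp hpφ hM hf y
      _ = M * D ^ 2 * p y * p y := by ring
      _ ≤ M * D ^ 2 * p x * p y := by gcongr; exact hp y
  calc _ ≤ 2 * (√L * √k * √(dist x y)) * (M * D ^ 2 * p x * p y) :=
        mul_le_mul hexp hfy (norm_nonneg _) (by positivity)
    _ = 2 * √L * M * √k * D ^ 2 * √(dist x y) * p x * p y := by ring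

/-- The growth bound on `f` enters at `y`, so `y` must be the point of smaller weight. -/
lemma norm_exp_phase_mul_comp_sub_le (hk : 0 ≤ k)
    (hφ : ∀ x y, dist (φ x) (φ y) ≤ k * dist x y)
    (hp : ∀ x, 0 ≤ p x) (hpφ : ∀ x, p (φ x) ≤ D * p x)
    {θ : E → ℝ} {L : ℝ} (hL : 0 ≤ L) (hθ : ∀ x y, |θ x - θ y| ≤ L * dist x y)
    {f : E → ℂ} {M₁ M₂ : ℝ} (hM₁ : 0 ≤ M₁) (hM₂ : 0 ≤ M₂)
    (hf₁ : ∀ x y, ‖f x - f y‖ ≤ M₁ * √(dist x y) * p x * p y)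
    (hf₂ : ∀ x, ‖f x‖ ≤ M₂ * p x ^ 2) {x y : E} (hxy : p y ≤ p x) :
    ‖exp (I * θ (φ x)) * f (φ x) - exp (I * θ (φ y)) * f (φ y)‖ ≤
      √k * D ^ 2 * ((M₁ + 2 * √L * M₂) * √(dist x y) * p x * p y) := by
  set e : E → ℂ := fun z => exp (I * θ z)
  have hsplit : e (φ x) * f (φ x) - e (φ y) * f (φ y) =
      e (φ x) * (f (φ x) - f (φ y)) + (e (φ x) - e (φ y)) * f (φ y) := by ring
  calc ‖e (φ x) * f (φ x) - e (φ y) * f (φ y)‖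
      ≤ ‖f (φ x) - f (φ y)‖ + ‖e (φ x) - e (φ y)‖ * ‖f (φ y)‖ := by
        rw [hsplit]
        refine (norm_add_le _ _).trans_eq ?_
        rw [norm_mul, norm_mul, norm_exp_I_mul_ofReal, one_mul]
    _ ≤ M₁ * √k * D ^ 2 * √(dist x y) * p x * p y +
          2 * √L * M₂ * √k * D ^ 2 * √(dist x y) * p x * p y :=
        add_le_add (norm_comp_sub_le hk hφ hp hpφ hM₁ hf₁ x y)
          (norm_exp_phase_comp_sub_mul_le hk hφ hp hpφ hL hθ hM₂ hf₂ hxy)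
    _ = √k * D ^ 2 * ((M₁ + 2 * √L * M₂) * √(dist x y) * p x * p y) := by ring

end Pointwise

lemma norm_integral_le_integral_mul_of_norm_le {G F : Type*} [MeasurableSpace G] {π : Measure G}
    [NormedAddCommGroup F] [NormedSpace ℝ F] {u : G → F} {w : G → ℝ} (hw : Integrable w π)
    {K : ℝ} (hu : ∀ g, ‖u g‖ ≤ w g * K) :
    ‖∫ g, u g ∂π‖ ≤ (∫ g, w g ∂π) * K :=
  (norm_integral_le_of_norm_le (hw.mul_const K) (.of_forall hu)).trans_eq (integral_mul_const K w)

lemma norm_integral_comp_le {E G : Type*} [MeasurableSpace G] {act : G → E → E} {π : Measure G}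
    {p : E → ℝ} {δ : G → ℝ} (hp : ∀ x, 0 ≤ p x)
    (hpδ : ∀ g x, p (act g x) ≤ δ g * p x)
    (hδ : Integrable (fun g => δ g ^ 2) π) {F : E → ℂ} {M : ℝ} (hM : 0 ≤ M)
    (hF : ∀ x, ‖F x‖ ≤ M * p x ^ 2) (x : E) :
    ‖∫ g, F (act g x) ∂π‖ ≤ (∫ g, δ g ^ 2 ∂π) * (M * p x ^ 2) :=
  norm_integral_le_integral_mul_of_norm_le hδ fun g =>
    (norm_comp_le hp (hpδ g) hM hF x).trans_eq (by ring)

section Kernel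

variable {E G : Type*} [MetricSpace E] [MeasurableSpace E] [OpensMeasurableSpace E]
  [MeasurableSpace G] {act : G → E → E} {π : Measure G} {p : E → ℝ} {δ : G → ℝ}

lemma integrable_comp_act (hact : Measurable fun q : G × E => act q.1 q.2)
    (hp : ∀ x, 0 ≤ p x) (hpδ : ∀ g x, p (act g x) ≤ δ g * p x)
    (hδ : Integrable (fun g => δ g ^ 2) π) {F : E → ℂ} (hFc : Continuous F) {M : ℝ}
    (hM : 0 ≤ M) (hF : ∀ x, ‖F x‖ ≤ M * p x ^ 2) (x : E) :
    Integrable (fun g => F (act g x)) π :=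
  (hδ.mul_const (M * p x ^ 2)).mono'
    (hFc.measurable.comp (hact.comp measurable_prodMk_right)).aestronglyMeasurable
    (.of_forall fun g => (norm_comp_le hp (hpδ g) hM hF x).trans_eq (by ring))

lemma norm_integral_exp_phase_mul_comp_sub_le (hact : Measurable fun q : G × E => act q.1 q.2)
    {c : G → ℝ} (hc : ∀ g, 0 ≤ c g)
    (hcLip : ∀ g x y, dist (act g x) (act g y) ≤ c g * dist x y)
    (hp : ∀ x, 0 < p x) (hpc : Continuous p) (hpδ : ∀ g x, p (act g x) ≤ δ g * p x)
    (hδ : Integrable (fun g => δ g ^ 2) π) (hcδ : Integrable (fun g => √(c g) * δ g ^ 2) π)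
    {θ : E → ℝ} {L : ℝ} (hL : 0 ≤ L) (hθ : ∀ x y, |θ x - θ y| ≤ L * dist x y)
    {f : E → ℂ} {M₁ M₂ : ℝ} (hM₂ : 0 ≤ M₂)
    (hf₁ : ∀ x y, ‖f x - f y‖ ≤ M₁ * √(dist x y) * p x * p y)
    (hf₂ : ∀ x, ‖f x‖ ≤ M₂ * p x ^ 2) (x y : E) :
    ‖∫ g, exp (I * θ (act g x)) * f (act g x) ∂π -
        ∫ g, exp (I * θ (act g y)) * f (act g y) ∂π‖ ≤
      (∫ g, √(c g) * δ g ^ 2 ∂π) *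
        ((M₁ + 2 * √L * M₂) * √(dist x y) * p x * p y) := by
  wlog hxy : p y ≤ p x generalizing x y
  · rw [norm_sub_rev, dist_comm]
    exact (this y x (le_of_not_ge hxy)).trans_eq (by ring)
  rcases eq_or_ne x y with rfl | hne
  · simp
  have hM₁ : 0 ≤ M₁ := by
    have hw : 0 < √(dist x y) * p x * p y := by
      have := hp x; have := hp y; have := dist_pos.2 hne; positivity
    exact nonneg_of_mul_nonneg_left ((norm_nonneg _).trans ((hf₁ x y).trans_eq (by ring))) hw
  have hθc : Continuous θ :=
    (LipschitzWith.of_dist_le_mul (K := ⟨L, hL⟩) fun x y =>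
      (hθ x y).trans_eq' (Real.dist_eq _ _)).continuous
  have hFc : Continuous fun z => exp (I * θ z) * f z := by
    have := continuous_of_norm_sub_le_mul_sqrt_dist hpc hf₁
    fun_prop
  have hF : ∀ z, ‖exp (I * θ z) * f z‖ ≤ M₂ * p z ^ 2 := fun z => by
    rw [norm_mul, norm_exp_I_mul_ofReal, one_mul]; exact hf₂ z
  have hp0 : ∀ x, 0 ≤ p x := fun x => (hp x).le
  rw [← integral_sub (integrable_comp_act hact hp0 hpδ hδ hFc hM₂ hF x)
    (integrable_comp_act hact hp0 hpδ hδ hFc hM₂ hF y)]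
  exact norm_integral_le_integral_mul_of_norm_le hcδ fun g =>
    norm_exp_phase_mul_comp_sub_le (hc g) (hcLip g) hp0 (hpδ g) hL hθ hM₁ hM₂ hf₁ hf₂ hxy

end Kernel

theorem stmt_11_general
    {E : Type*} [MetricSpace E] [MeasurableSpace E] [BorelSpace E]
    (x₀ : E)
    -- the Lipschitz transformations of `E`
    {G : Type*} [MeasurableSpace G]
    (act : G → E → E) (hact : Measurable fun p : G × E => act p.1 p.2)
    (c : G → ℝ) (hc0 : ∀ g, 0 ≤ c g)
    (hcLip : ∀ g x y, dist (act g x) (act g y) ≤ c g * dist x y)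
    (π : Measure G)
    -- the Lipschitz function `ξ` and the Fourier kernels `Q(t)`
    (ξ : E → ℝ) (C : ℝ) (hC : 0 ≤ C) (hξLip : ∀ x y, |ξ x - ξ y| ≤ C * dist x y)
    (Qt : ℝ → (E → ℂ) → E → ℂ)
    (hQt : ∀ t f x, Qt t f x = ∫ g, Complex.exp (Complex.I * t * ξ (act g x)) * f (act g x) ∂π)
    -- the weights `p_λ` and `δ_λ`
    (lam : ℝ) (hlam0 : 0 < lam)
    (pl : E → ℝ) (hpl : ∀ x, pl x = 1 + lam * Real.sqrt (dist x x₀))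
    (δ : G → ℝ) (hδ : ∀ g, δ g = Real.sqrt (max (c g) 1) + lam * Real.sqrt (dist (act g x₀) x₀))
    -- the constants `A` and `B`, assumed finite
    (A B : ℝ)
    (hAint : Integrable (fun g => Real.sqrt (c g) * δ g ^ 2) π)
    (hA : A = ∫ g, Real.sqrt (c g) * δ g ^ 2 ∂π)
    (hBint : Integrable (fun g => δ g ^ 2) π)
    (hB : B = ∫ g, δ g ^ 2 ∂π) :
    ∀ t : ℝ, ∀ f : E → ℂ, ∀ M₁ M₂ : ℝ,
      (∀ x y, ‖f x - f y‖ ≤ M₁ * Real.sqrt (dist x y) * pl x * pl y) →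
      (∀ x, ‖f x‖ ≤ M₂ * pl x ^ 2) →
      (∀ x y, ‖Qt t f x - Qt t f y‖ ≤
          (A * M₁ + 2 * A * Real.sqrt C * Real.sqrt |t| * M₂) *
            Real.sqrt (dist x y) * pl x * pl y) ∧
      (∀ x, ‖Qt t f x‖ ≤ B * M₂ * pl x ^ 2) := by
  intro t f M₁ M₂ hf₁ hf₂
  have hp : ∀ x, 0 < pl x := fun x => by rw [hpl]; positivity
  have hpc : Continuous pl := by rw [funext hpl]; fun_prop
  have hpδ : ∀ g x, pl (act g x) ≤ δ g * pl x := fun g x => by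
    rw [hpl, hpl, hδ]; exact one_add_mul_sqrt_dist_comp_le (hc0 g) hlam0.le (hcLip g) x₀ x
  have hM₂ : 0 ≤ M₂ :=
    nonneg_of_mul_nonneg_left ((norm_nonneg _).trans (hf₂ x₀)) (pow_pos (hp x₀) 2)
  have hθ : ∀ x y, |t * ξ x - t * ξ y| ≤ |t| * C * dist x y := fun x y => by
    rw [← mul_sub, abs_mul, mul_assoc]
    exact mul_le_mul_of_nonneg_left (hξLip x y) (abs_nonneg t)
  have hQ : ∀ x, Qt t f x = ∫ g, exp (I * ↑(t * ξ (act g x))) * f (act g x) ∂π :=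
    fun x => by rw [hQt]; push_cast; simp only [mul_assoc]
  refine ⟨fun x y => ?_, fun x => ?_⟩
  · rw [hQ, hQ]
    refine (norm_integral_exp_phase_mul_comp_sub_le hact hc0 hcLip hp hpc hpδ hBint hAint
      (by positivity) hθ hM₂ hf₁ hf₂ x y).trans_eq ?_
    rw [← hA, Real.sqrt_mul (abs_nonneg t)]
    ring
  · rw [hQ, hB, mul_assoc]
    refine norm_integral_comp_le (F := fun z => exp (I * ↑(t * ξ z)) * f z)
      (fun x => (hp x).le) hpδ hBint hM₂ (fun z => ?_) x
    rw [norm_mul, norm_exp_I_mul_ofReal, one_mul]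
    exact hf₂ z

/-- Lemma 3.2 of the paper (first part): the Fourier kernel `Q(t)` maps `L₁` into `L₁`,
with `m₁(Q(t)f) ≤ A m₁(f) + 2 A C^{1/2} |t|^{1/2} |f|₁` and `|Q(t)f|₁ ≤ B |f|₁`
(stated via arbitrary admissible bounds `M₁ ≥ m₁(f)` and `M₂ ≥ |f|₁`). -/
theorem stmt_11
    {E : Type*} [MetricSpace E] [MeasurableSpace E] [BorelSpace E]
    (hballs : ∀ (x : E) (r : ℝ), IsCompact (Metric.closedBall x r))
    (x₀ : E)
    -- the Lipschitz transformations of `E`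
    {G : Type*} [MeasurableSpace G]
    (act : G → E → E) (hact : Measurable fun p : G × E => act p.1 p.2)
    (c : G → ℝ) (hc0 : ∀ g, 0 ≤ c g)
    (hcLip : ∀ g x y, dist (act g x) (act g y) ≤ c g * dist x y)
    (hcLeast : ∀ g r, 0 ≤ r → (∀ x y, dist (act g x) (act g y) ≤ r * dist x y) → c g ≤ r)
    (π : Measure G) [IsProbabilityMeasure π]
    -- the Lipschitz function `ξ` and the Fourier kernels `Q(t)`
    (ξ : E → ℝ) (C : ℝ) (hC : 0 ≤ C) (hξLip : ∀ x y, |ξ x - ξ y| ≤ C * dist x y)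
    (Qt : ℝ → (E → ℂ) → E → ℂ)
    (hQt : ∀ t f x, Qt t f x = ∫ g, Complex.exp (Complex.I * t * ξ (act g x)) * f (act g x) ∂π)
    -- the weights `p_λ` and `δ_λ`
    (lam : ℝ) (hlam0 : 0 < lam) (hlam1 : lam ≤ 1)
    (pl : E → ℝ) (hpl : ∀ x, pl x = 1 + lam * Real.sqrt (dist x x₀))
    (δ : G → ℝ) (hδ : ∀ g, δ g = Real.sqrt (max (c g) 1) + lam * Real.sqrt (dist (act g x₀) x₀))
    -- the constants `A` and `B`, assumed finite
    (A B : ℝ)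
    (hAint : Integrable (fun g => Real.sqrt (c g) * δ g ^ 2) π)
    (hA : A = ∫ g, Real.sqrt (c g) * δ g ^ 2 ∂π)
    (hBint : Integrable (fun g => δ g ^ 2) π)
    (hB : B = ∫ g, δ g ^ 2 ∂π) :
    ∀ t : ℝ, ∀ f : E → ℂ, ∀ M₁ M₂ : ℝ,
      (∀ x y, ‖f x - f y‖ ≤ M₁ * Real.sqrt (dist x y) * pl x * pl y) →
      (∀ x, ‖f x‖ ≤ M₂ * pl x ^ 2) →
      (∀ x y, ‖Qt t f x - Qt t f y‖ ≤
          (A * M₁ + 2 * A * Real.sqrt C * Real.sqrt |t| * M₂) *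
            Real.sqrt (dist x y) * pl x * pl y) ∧
      (∀ x, ‖Qt t f x‖ ≤ B * M₂ * pl x ^ 2) :=
  stmt_11_general x₀ act hact c hc0 hcLip π ξ C hC hξLip Qt hQt lam hlam0 pl hpl δ hδ A B hAint hA
    hBint hB
end

section
/- Assume Q is W-geometrically ergodic: there exist C ≥ 0 and κ₀ < 1 such that ‖Q^n f − ν(f)𝟏‖_W ≤ C κ₀^n ‖f‖_W for all n ≥ 1 and all f with ‖f‖_W < ∞, where ν is a Q-invariant probability measure with ν(W) < ∞. Define the kernel Q̃(x,dy) = W(x)^{−1} W(y) Q(x,dy) and the probability measure ν̃(A) = ν(W·1_A)/ν(W). Then there exists an integer ℓ ≥ 1 such that for every A ∈ ℰ with ν̃(A) ≤ 1/(4ν(W)) and every x ∈ E one has (Q̃)^ℓ(x,A) ≤ 3/4. -/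
/-! Choose `ℓ ≥ 1` with `C κ₀^ℓ ≤ 1/2` and apply geometric ergodicity at time `ℓ` to `f = W·1_A`,
which has `‖f‖_W ≤ 1`: `Q^ℓ f(x) ≤ ν(f) + W(x)/2 ≤ 1/4 + W(x)/2 ≤ (3/4) W(x)`, using `W ≥ 1`.
Since `Q^ℓ W` may be infinite, the iterated Bochner integrals only compute integrals against
`(Q^ℓ)(x, ·)` for bounded functions, so the estimate is first proved on `A ∩ {W ≤ m}` and then
passed to `A` by monotone convergence. -/

open MeasureTheory ENNReal ProbabilityTheory

namespace ProbabilityTheory.Kernel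

variable {α : Type*} [MeasurableSpace α]

instance isFiniteKernel_pow (κ : Kernel α α) [IsFiniteKernel κ] (n : ℕ) :
    IsFiniteKernel (κ ^ n) := by
  induction n with
  | zero => rw [pow_zero]; exact inferInstanceAs (IsFiniteKernel Kernel.id)
  | succ n ih => rw [pow_succ]; exact inferInstanceAs (IsFiniteKernel ((κ ^ n) ∘ₖ κ))

theorem iterate_lintegral_eq_lintegral_pow (κ : Kernel α α) (n : ℕ) {f : α → ℝ≥0∞}
    (hf : Measurable f) (a : α) :
    (fun g a => ∫⁻ b, g b ∂κ a)^[n] f a = ∫⁻ b, f b ∂(κ ^ n) a := by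
  induction n generalizing a with
  | zero => simp only [Function.iterate_zero, id_eq, pow_zero]; exact (lintegral_dirac' a hf).symm
  | succ n ih =>
    rw [Function.iterate_succ_apply', pow_succ]
    simp only [ih]
    exact (lintegral_comp _ _ a hf).symm

theorem iterate_integral_eq_integral_pow {F : Type*} [NormedAddCommGroup F] [NormedSpace ℝ F]
    [CompleteSpace F] (κ : Kernel α α) [IsFiniteKernel κ] (n : ℕ) {f : α → F}
    (hf : StronglyMeasurable f) {c : ℝ} (hfc : ∀ b, ‖f b‖ ≤ c) (a : α) :
    (fun g a => ∫ b, g b ∂κ a)^[n] f a = ∫ b, f b ∂(κ ^ n) a := by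
  induction n generalizing a with
  | zero => simp only [Function.iterate_zero, id_eq, pow_zero]; exact (integral_dirac' _ a hf).symm
  | succ n ih =>
    rw [Function.iterate_succ_apply', pow_succ]
    simp only [ih]
    exact (integral_comp (.of_bound hf.aestronglyMeasurable c (.of_forall hfc))).symm

end ProbabilityTheory.Kernel

section WeightedSupNorm

variable {E F : Type*} [NormedAddCommGroup F]

noncomputable def weightedSupNorm (W : E → ℝ) (h : E → F) : ℝ≥0∞ :=
  ⨆ x, (‖h x‖₊ : ℝ≥0∞) / ENNReal.ofReal (W x)

theorem weightedSupNorm_le_ofReal_iff {W : E → ℝ} (hW : ∀ x, 0 < W x) {c : ℝ} (hc : 0 ≤ c)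
    {h : E → F} : weightedSupNorm W h ≤ ENNReal.ofReal c ↔ ∀ x, ‖h x‖ ≤ c * W x := by
  simp only [weightedSupNorm, iSup_le_iff]
  refine forall_congr' fun x => ?_
  rw [ENNReal.div_le_iff (by simpa using hW x) ofReal_ne_top, ← ofReal_mul hc, ← enorm_eq_nnnorm,
    ← ofReal_norm, ofReal_le_ofReal_iff (by have := hW x; positivity)]

end WeightedSupNorm

theorem setLIntegral_le_of_forall_sublevel {α : Type*} [MeasurableSpace α] (μ : Measure α)
    (f : α → ℝ≥0∞) (g : α → ℝ) (A : Set α) {r : ℝ≥0∞}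
    (h : ∀ m : ℕ, ∫⁻ y in A ∩ {y | g y ≤ m}, f y ∂μ ≤ r) : ∫⁻ y in A, f y ∂μ ≤ r := by
  have hA : A = ⋃ m : ℕ, A ∩ {y | g y ≤ m} := by
    ext y
    simpa using fun _ => exists_nat_ge (g y)
  have hmono : Monotone fun m : ℕ => A ∩ {y | g y ≤ m} := fun m m' hm y hy =>
    ⟨hy.1, show g y ≤ m' from le_trans hy.2 (Nat.cast_le.2 hm)⟩
  rw [hA, setLIntegral_iUnion_of_directed _ hmono.directed_le]
  exact iSup_le h

section GeometricErgodicity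

variable {E : Type*} [MeasurableSpace E] (Q : Kernel E E) [IsFiniteKernel Q] (W : E → ℝ)
  (ν : Measure E)

def WeightedMixingBound (n : ℕ) (c : ℝ) : Prop :=
  ∀ f : E → ℂ, Measurable f → weightedSupNorm W f ≠ ⊤ →
    weightedSupNorm W (fun x => (fun g x => ∫ y, g y ∂(Q x))^[n] f x - ∫ y, f y ∂ν) ≤
      ENNReal.ofReal c * weightedSupNorm W f

variable {Q W ν}

theorem integral_pow_le_integral_add_of_weightedMixingBound (hW : ∀ x, 0 < W x) {n : ℕ}
    {c : ℝ} (hc : 0 ≤ c) (herg : WeightedMixingBound Q W ν n c)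
    {f : E → ℝ} (hf : Measurable f) (hfW : ∀ y, |f y| ≤ W y) {b : ℝ} (hfb : ∀ y, |f y| ≤ b)
    (x : E) : ∫ y, f y ∂(Q ^ n) x ≤ ∫ y, f y ∂ν + c * W x := by
  have hF : weightedSupNorm W (fun y => (f y : ℂ)) ≤ 1 := by
    rw [← ofReal_one, weightedSupNorm_le_ofReal_iff hW zero_le_one]
    simpa using hfW
  have key := ((herg _ (by fun_prop) (ne_top_of_le_ne_top one_ne_top hF)).trans
    (mul_le_of_le_one_right' hF))
  rw [weightedSupNorm_le_ofReal_iff hW hc] at key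
  have hx := key x
  rw [Kernel.iterate_integral_eq_integral_pow Q n (by fun_prop) (c := b) (by simpa using hfb),
    integral_complex_ofReal, integral_complex_ofReal, ← Complex.ofReal_sub, Complex.norm_real,
    Real.norm_eq_abs] at hx
  linarith [le_abs_self (∫ y, f y ∂(Q ^ n) x - ∫ y, f y ∂ν)]

theorem setLIntegral_pow_le_ofReal_setIntegral_add_of_bddAbove (hW : ∀ x, 0 < W x) (hWm : Measurable W)
    {n : ℕ} {c : ℝ} (hc : 0 ≤ c) (herg : WeightedMixingBound Q W ν n c)
    {B : Set E} (hB : MeasurableSet B) {b : ℝ} (hWb : ∀ y ∈ B, W y ≤ b) (x : E) :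
    ∫⁻ y in B, ENNReal.ofReal (W y) ∂(Q ^ n) x ≤
      ENNReal.ofReal (∫ y in B, W y ∂ν + c * W x) := by
  have hfW : ∀ y, |B.indicator W y| ≤ W y := fun y => by
    by_cases hy : y ∈ B <;> simp [hy, abs_of_pos (hW y), (hW y).le]
  have hfb : ∀ y, |B.indicator W y| ≤ |b| := fun y => by
    by_cases hy : y ∈ B
    · simpa [hy, abs_of_pos (hW y)] using (hWb y hy).trans (le_abs_self b)
    · simp [hy]
  have hf : Integrable (B.indicator W) ((Q ^ n) x) :=
    .of_bound (hWm.indicator hB).aestronglyMeasurable |b| (.of_forall hfb)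
  calc ∫⁻ y in B, ENNReal.ofReal (W y) ∂(Q ^ n) x
      = ENNReal.ofReal (∫ y, B.indicator W y ∂(Q ^ n) x) := by
        rw [ofReal_integral_eq_lintegral_ofReal hf
          (.of_forall (Set.indicator_nonneg fun y _ => (hW y).le)), ← lintegral_indicator hB]
        congr 1 with y
        by_cases hy : y ∈ B <;> simp [hy]
    _ ≤ ENNReal.ofReal (∫ y, B.indicator W y ∂ν + c * W x) :=
        ofReal_le_ofReal (integral_pow_le_integral_add_of_weightedMixingBound hW hc herg
          (hWm.indicator hB) hfW hfb x)
    _ = ENNReal.ofReal (∫ y in B, W y ∂ν + c * W x) := by rw [integral_indicator hB]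

theorem setLIntegral_pow_le_ofReal_setIntegral_add (hW : ∀ x, 0 < W x) (hWm : Measurable W)
    {n : ℕ} {c : ℝ} (hc : 0 ≤ c) (herg : WeightedMixingBound Q W ν n c)
    {A : Set E} (hA : MeasurableSet A) (hWA : IntegrableOn W A ν) (x : E) :
    ∫⁻ y in A, ENNReal.ofReal (W y) ∂(Q ^ n) x ≤
      ENNReal.ofReal (∫ y in A, W y ∂ν + c * W x) := by
  refine setLIntegral_le_of_forall_sublevel _ _ W A fun m => ?_
  have hsub : ∫ y in A ∩ {y | W y ≤ m}, W y ∂ν ≤ ∫ y in A, W y ∂ν :=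
    setIntegral_mono_set hWA (.of_forall fun y => (hW y).le) Set.inter_subset_left.eventuallyLE
  refine (setLIntegral_pow_le_ofReal_setIntegral_add_of_bddAbove hW hWm hc herg
    (hA.inter (measurableSet_le hWm measurable_const)) (fun y hy => hy.2) x).trans ?_
  gcongr

end GeometricErgodicity

theorem stmt_16_general
    {E : Type*} [MeasurableSpace E]
    (Q : ProbabilityTheory.Kernel E E) [ProbabilityTheory.IsMarkovKernel Q]
    (W : E → ℝ) (hWmeas : Measurable W) (hW1 : ∀ x, 1 ≤ W x)
    -- the operator `Q` acting on complex functions, and on `ℝ≥0∞`-valued functions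
    (Qop : (E → ℂ) → E → ℂ) (hQop : ∀ f x, Qop f x = ∫ y, f y ∂(Q x))
    (QopL : (E → ℝ≥0∞) → E → ℝ≥0∞) (hQopL : ∀ f x, QopL f x = ∫⁻ y, f y ∂(Q x))
    -- the weighted norm `‖·‖_W`
    (normW : (E → ℂ) → ℝ≥0∞)
    (hnormW : ∀ h, normW h = ⨆ x : E, (‖h x‖₊ : ℝ≥0∞) / ENNReal.ofReal (W x))
    -- the invariant probability measure with `ν(W) < ∞`
    (ν : Measure E) [IsProbabilityMeasure ν]
    (hνW : Integrable W ν)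
    -- `W`-geometric ergodicity
    (C κ₀ : ℝ) (hC : 0 ≤ C) (hκ₀0 : 0 ≤ κ₀) (hκ₀1 : κ₀ < 1)
    (herg : ∀ n : ℕ, 1 ≤ n → ∀ f : E → ℂ, Measurable f → normW f ≠ ⊤ →
      normW (fun x => Qop^[n] f x - ∫ y, f y ∂ν) ≤ ENNReal.ofReal (C * κ₀ ^ n) * normW f) :
    ∃ l : ℕ, 1 ≤ l ∧ ∀ A : Set E, MeasurableSet A →
      (∫ y in A, W y ∂ν) / (∫ y, W y ∂ν) ≤ 1 / (4 * ∫ y, W y ∂ν) →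
      ∀ x : E, (ENNReal.ofReal (W x))⁻¹ *
          QopL^[l] (fun y => ENNReal.ofReal (W y) * A.indicator (fun _ => 1) y) x
        ≤ 3 / 4 := by
  obtain rfl : Qop = fun f x => ∫ y, f y ∂(Q x) := funext fun f => funext (hQop f)
  obtain rfl : QopL = fun f x => ∫⁻ y, f y ∂(Q x) := funext fun f => funext (hQopL f)
  obtain rfl : normW = weightedSupNorm W := funext hnormW
  have hW : ∀ x, 0 < W x := fun x => one_pos.trans_le (hW1 x)
  obtain ⟨l, hl1, hCl⟩ : ∃ l : ℕ, 1 ≤ l ∧ C * κ₀ ^ l ≤ 1 / 2 :=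
    ((Filter.eventually_ge_atTop 1).and
      (((tendsto_pow_atTop_nhds_zero_of_lt_one hκ₀0 hκ₀1).const_mul C).eventually
        (ge_mem_nhds (by norm_num)))).exists
  refine ⟨l, hl1, fun A hA hAsmall x => ?_⟩
  have hνW1 : 1 ≤ ∫ y, W y ∂ν := by simpa using integral_mono (integrable_const 1) hνW hW1
  have hνA : ∫ y in A, W y ∂ν ≤ 1 / 4 :=
    (div_le_div_iff_of_pos_right (by linarith)).1 (hAsmall.trans_eq (by ring))
  have hind : (fun y => ENNReal.ofReal (W y) * A.indicator (fun _ => 1) y) =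
      A.indicator fun y => ENNReal.ofReal (W y) := by
    ext y
    by_cases hy : y ∈ A <;> simp [hy]
  rw [Kernel.iterate_lintegral_eq_lintegral_pow _ _ (by fun_prop), hind, lintegral_indicator hA,
    ENNReal.inv_mul_le_iff (by simpa using hW x) ofReal_ne_top]
  calc ∫⁻ y in A, ENNReal.ofReal (W y) ∂(Q ^ l) x
      ≤ ENNReal.ofReal (∫ y in A, W y ∂ν + C * κ₀ ^ l * W x) :=
        setLIntegral_pow_le_ofReal_setIntegral_add hW hWmeas (by positivity) (herg l hl1) hA
          hνW.integrableOn x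
    _ ≤ ENNReal.ofReal (3 / 4 * W x) := ofReal_le_ofReal (by nlinarith [hW1 x])
    _ = ENNReal.ofReal (W x) * (3 / 4) := by
        rw [mul_comm, ofReal_mul (hW x).le, ofReal_div_of_pos (by norm_num)]
        norm_num

/-- The appendix estimate of the paper: for a `W`-geometrically ergodic kernel, there is
`ℓ ≥ 1` such that `ν̃(A) ≤ 1/(4ν(W))` implies `(Q̃)^ℓ(x,A) ≤ 3/4` for every `x`, where
`(Q̃)^ℓ(x,A) = W(x)⁻¹ (Q^ℓ(W·1_A))(x)` and `ν̃(A) = ν(W·1_A)/ν(W)`. -/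
theorem stmt_16
    {E : Type*} [MeasurableSpace E]
    (Q : ProbabilityTheory.Kernel E E) [ProbabilityTheory.IsMarkovKernel Q]
    (W : E → ℝ) (hWmeas : Measurable W) (hW1 : ∀ x, 1 ≤ W x)
    -- the operator `Q` acting on complex functions, and on `ℝ≥0∞`-valued functions
    (Qop : (E → ℂ) → E → ℂ) (hQop : ∀ f x, Qop f x = ∫ y, f y ∂(Q x))
    (QopL : (E → ℝ≥0∞) → E → ℝ≥0∞) (hQopL : ∀ f x, QopL f x = ∫⁻ y, f y ∂(Q x))
    -- the weighted norm `‖·‖_W`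
    (normW : (E → ℂ) → ℝ≥0∞)
    (hnormW : ∀ h, normW h = ⨆ x : E, (‖h x‖₊ : ℝ≥0∞) / ENNReal.ofReal (W x))
    -- the invariant probability measure with `ν(W) < ∞`
    (ν : Measure E) [IsProbabilityMeasure ν]
    (hinv : ν.bind (fun x => Q x) = ν) (hνW : Integrable W ν)
    -- `W`-geometric ergodicity
    (C κ₀ : ℝ) (hC : 0 ≤ C) (hκ₀0 : 0 ≤ κ₀) (hκ₀1 : κ₀ < 1)
    (herg : ∀ n : ℕ, 1 ≤ n → ∀ f : E → ℂ, Measurable f → normW f ≠ ⊤ →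
      normW (fun x => Qop^[n] f x - ∫ y, f y ∂ν) ≤ ENNReal.ofReal (C * κ₀ ^ n) * normW f) :
    ∃ l : ℕ, 1 ≤ l ∧ ∀ A : Set E, MeasurableSet A →
      (∫ y in A, W y ∂ν) / (∫ y, W y ∂ν) ≤ 1 / (4 * ∫ y, W y ∂ν) →
      ∀ x : E, (ENNReal.ofReal (W x))⁻¹ *
          QopL^[l] (fun y => ENNReal.ofReal (W y) * A.indicator (fun _ => 1) y) x
        ≤ 3 / 4 :=
  stmt_16_general Q W hWmeas hW1 Qop hQop QopL hQopL normW hnormW ν hνW C κ₀ hC hκ₀0 hκ₀1 herg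
end

section
/- Assume: (i) (B,‖·‖) is a Banach space whose elements are measurable functions E → ℂ, containing the constant function 𝟏, with B ⊆ L³(ν) continuously, Q ∈ 𝓛(B), and Q is B-geometrically ergodic, i.e. there are C ≥ 0 and κ₀ < 1 with ‖Q^n f − ν(f)𝟏‖ ≤ C κ₀^n ‖f‖ for all n ≥ 1, f ∈ B; (ii) ξ ∈ B is real-valued with ν(ξ) = 0, the series ξ̌ = Σ_{n≥0} Q^n ξ converges absolutely in B, σ² = ν(ξ̌²) − ν((Qξ̌)²) and ψ = Q(ξ̌²) − (Qξ̌)² − σ²·𝟏; (iii) (B₂,‖·‖₂) is a Banach space of measurable functions E → ℂ, continuously embedded in L¹(ν), containing the product gh for all g, h ∈ B, with Q ∈ 𝓛(B₂), Q B₂-geometrically ergodic, and such that there is A > 0 with (∫|f|^{3/2} dν)^{2/3} ≤ A‖f‖₂ for every f ∈ B₂. Then Σ_{p=0}^∞ (∫_E |Q^p ψ|^{3/2} dν)^{2/3} < ∞. -/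
/-!
Since `B₂` contains the products of elements of `B`, `ψ` is the function of the element
`Q(ξ̌ ξ̌) - (Qξ̌)(Qξ̌) - σ² 𝟏` of `B₂`, and by invariance of `ν` the choice of `σ²` says exactly
`ν(ψ) = 0`. Geometric ergodicity on `B₂` then makes `‖Q^p ψ‖₂` decay
geometrically, and the `L^{3/2}` bound transfers this decay to the summands.
-/

open MeasureTheory ProbabilityTheory

theorem integral_integral_eq_of_bind_eq {E F : Type*} [MeasurableSpace E]
    [NormedAddCommGroup F] [NormedSpace ℝ F]
    (Q : Kernel E E) [IsSFiniteKernel Q] (ν : Measure E) [SFinite ν]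
    (hinv : ν.bind (fun x => Q x) = ν) {f : E → F} (hf : Integrable f ν) :
    ∫ x, ∫ y, f y ∂(Q x) ∂ν = ∫ x, f x ∂ν := by
  have hcomp : ν = (Q ∘ₖ Kernel.const Unit ν) () :=
    hinv.symm.trans Measure.comp_eq_comp_const_apply
  rw [hcomp] at hf
  conv_rhs => rw [hcomp, Kernel.integral_comp hf, Kernel.const_apply]

theorem integral_sub_sub_eq_zero_of_bind_eq {E : Type*} [MeasurableSpace E]
    (Q : Kernel E E) [IsSFiniteKernel Q] (ν : Measure E) [IsProbabilityMeasure ν]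
    (hinv : ν.bind (fun x => Q x) = ν) {Qop : (E → ℝ) → E → ℝ}
    (hQop : ∀ g x, Qop g x = ∫ y, g y ∂(Q x)) {u v : E → ℝ} (hu : Integrable u ν)
    (hQu : Integrable (Qop u) ν) (hv : Integrable v ν) :
    ∫ x, Qop u x - v x - ((∫ x, u x ∂ν) - ∫ x, v x ∂ν) ∂ν = 0 := by
  have hQuv : Integrable (fun x => Qop u x - v x) ν := hQu.sub hv
  rw [integral_sub hQuv (integrable_const _), integral_sub hQu hv]
  simp only [hQop, integral_integral_eq_of_bind_eq Q ν hinv hu]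
  simp

section Intertwining

variable {E V : Type*} [MeasurableSpace E] [AddCommMonoid V] [TopologicalSpace V] [Module ℂ V]
  {Q : Kernel E E} {Qop : (E → ℝ) → E → ℝ} {ι : V → E → ℂ} {T : V →L[ℂ] V}

theorem apply_eq_ofReal_of_intertwines (hQop : ∀ g x, Qop g x = ∫ y, g y ∂(Q x))
    (hT : ∀ f, ι (T f) = fun x => ∫ y, ι f y ∂(Q x)) {f : V} {g : E → ℝ}
    (hfg : ι f = fun x => (g x : ℂ)) :
    ι (T f) = fun x => (Qop g x : ℂ) := by
  rw [hT, hfg]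
  exact funext fun x => (hQop g x).symm ▸ integral_complex_ofReal

theorem pow_apply_eq_ofReal_iterate_of_intertwines (hQop : ∀ g x, Qop g x = ∫ y, g y ∂(Q x))
    (hT : ∀ f, ι (T f) = fun x => ∫ y, ι f y ∂(Q x)) {f : V} {g : E → ℝ}
    (hfg : ι f = fun x => (g x : ℂ)) (p : ℕ) :
    ι ((T ^ p) f) = fun x => (Qop^[p] g x : ℂ) := by
  induction p with
  | zero => simpa using hfg
  | succ p ih =>
    rw [pow_succ', mul_apply_eq_comp, apply_eq_ofReal_of_intertwines hQop hT ih,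
      Function.iterate_succ_apply']

end Intertwining

theorem summable_norm_pow_apply_of_geometricErgodic {𝕜 V : Type*} [NormedField 𝕜]
    [NormedAddCommGroup V] [NormedSpace 𝕜 V] {T : V →L[𝕜] V} {mean : V → 𝕜} {one : V}
    {C κ : ℝ} (hκ0 : 0 ≤ κ) (hκ1 : κ < 1)
    (herg : ∀ n : ℕ, 1 ≤ n → ∀ f : V, ‖(T ^ n) f - mean f • one‖ ≤ C * κ ^ n * ‖f‖)
    {f : V} (hf : mean f = 0) :
    Summable fun n => ‖(T ^ n) f‖ := by
  rw [← summable_nat_add_iff 1]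
  refine .of_nonneg_of_le (fun _ => norm_nonneg _) (fun n => ?_)
    ((summable_geometric_of_lt_one hκ0 hκ1).mul_left (C * κ * ‖f‖))
  calc ‖(T ^ (n + 1)) f‖ ≤ C * κ ^ (n + 1) * ‖f‖ := by
        simpa [hf] using herg (n + 1) (Nat.le_add_left 1 n) f
    _ = C * κ * ‖f‖ * κ ^ n := by ring

theorem stmt_17_general
    {E : Type*} [MeasurableSpace E]
    (Q : ProbabilityTheory.Kernel E E) [ProbabilityTheory.IsMarkovKernel Q]
    (ν : Measure E) [IsProbabilityMeasure ν]
    (hinv : ν.bind (fun x => Q x) = ν)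
    -- the action of `Q` on real functions
    (Qop : (E → ℝ) → E → ℝ) (hQop : ∀ f x, Qop f x = ∫ y, f y ∂(Q x))
    -- (i) the Banach space `B` of measurable functions, with `𝟏 ∈ B`, `B ⊆ L³(ν)`
    -- continuously, `Q ∈ 𝓛(B)`, and `Q` `B`-geometrically ergodic
    {B : Type*} [NormedAddCommGroup B] [NormedSpace ℂ B]
    (ι : B →ₗ[ℂ] (E → ℂ))
    (QB : B →L[ℂ] B) (hQB : ∀ f : B, ι (QB f) = fun x => ∫ y, ι f y ∂(Q x))
    -- (ii) `ξ ∈ B` real-valued with `ν(ξ) = 0`, `ξ̌ = Σ Qⁿξ` converging absolutely in `B`,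
    -- and the associated `σ²` and `ψ`
    (ξcB : B)
    (ξc : E → ℝ) (hξc : ∀ x, ι ξcB x = (ξc x : ℂ))
    (σ2 : ℝ) (hσ2 : σ2 = (∫ x, ξc x ^ 2 ∂ν) - ∫ x, Qop ξc x ^ 2 ∂ν)
    (ψ : E → ℝ) (hψ : ∀ x, ψ x = Qop (fun y => ξc y ^ 2) x - Qop ξc x ^ 2 - σ2)
    -- (iii) the Banach space `B₂`, continuously embedded in `L¹(ν)`, containing the
    -- products of elements of `B`, with `Q ∈ 𝓛(B₂)` `B₂`-geometrically ergodic, and whose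
    -- norm dominates the `L^{3/2}(ν)` norm
    {B₂ : Type*} [NormedAddCommGroup B₂] [NormedSpace ℂ B₂]
    (ι₂ : B₂ →ₗ[ℂ] (E → ℂ))
    (one₂ : B₂) (hone₂ : ι₂ one₂ = fun _ => 1)
    (hL1 : ∀ f : B₂, Integrable (ι₂ f) ν)
    (hprod : ∀ g h : B, ∃ p : B₂, ι₂ p = fun x => ι g x * ι h x)
    (QB₂ : B₂ →L[ℂ] B₂) (hQB₂ : ∀ f : B₂, ι₂ (QB₂ f) = fun x => ∫ y, ι₂ f y ∂(Q x))
    (C₂ κ₂ : ℝ) (hκ₂0 : 0 ≤ κ₂) (hκ₂1 : κ₂ < 1)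
    (herg₂ : ∀ n : ℕ, 1 ≤ n → ∀ f : B₂,
      ‖(QB₂ ^ n) f - (∫ x, ι₂ f x ∂ν) • one₂‖ ≤ C₂ * κ₂ ^ n * ‖f‖)
    (A : ℝ)
    (hA32 : ∀ f : B₂, (∫ x, ‖ι₂ f x‖ ^ (3 / 2 : ℝ) ∂ν) ^ (2 / 3 : ℝ) ≤ A * ‖f‖) :
    Summable fun p => (∫ x, |Qop^[p] ψ x| ^ (3 / 2 : ℝ) ∂ν) ^ (2 / 3 : ℝ) := by
  have hreal : ∀ (f : B₂) (g : E → ℝ), (ι₂ f = fun x => (g x : ℂ)) → Integrable g ν :=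
    fun f g hfg => by simpa [hfg] using (hL1 f).re
  obtain ⟨p2, hp2⟩ := hprod ξcB ξcB
  obtain ⟨q2, hq2⟩ := hprod (QB ξcB) (QB ξcB)
  have hξc2 : ι₂ p2 = fun x => ((ξc x ^ 2 : ℝ) : ℂ) := funext fun x => by simp [hp2, hξc, sq]
  have hQξc : ι (QB ξcB) = fun x => (Qop ξc x : ℂ) :=
    apply_eq_ofReal_of_intertwines hQop hQB (funext hξc)
  have hQξc2 : ι₂ q2 = fun x => ((Qop ξc x ^ 2 : ℝ) : ℂ) := funext fun x => by simp [hq2, hQξc, sq]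
  have hQξc2' : ι₂ (QB₂ p2) = fun x => (Qop (fun y => ξc y ^ 2) x : ℂ) :=
    apply_eq_ofReal_of_intertwines hQop hQB₂ hξc2
  set ψB : B₂ := QB₂ p2 - q2 - (σ2 : ℂ) • one₂
  have hψB : ι₂ ψB = fun x => (ψ x : ℂ) := funext fun x => by
    simp [ψB, hQξc2', hQξc2, hone₂, hψ]
  have hψν : ∫ x, ψ x ∂ν = 0 := by
    simp only [hψ, hσ2]
    exact integral_sub_sub_eq_zero_of_bind_eq Q ν hinv hQop (hreal _ _ hξc2) (hreal _ _ hQξc2')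
      (hreal _ _ hQξc2)
  have hdecay : Summable fun p => ‖(QB₂ ^ p) ψB‖ :=
    summable_norm_pow_apply_of_geometricErgodic hκ₂0 hκ₂1 herg₂
      (by simp only [hψB]; rw [integral_complex_ofReal, hψν, Complex.ofReal_zero])
  refine .of_nonneg_of_le (fun p => by positivity) (fun p => ?_) (hdecay.mul_left A)
  have hbound := hA32 ((QB₂ ^ p) ψB)
  rw [pow_apply_eq_ofReal_iterate_of_intertwines hQop hQB₂ hψB p] at hbound
  simpa using hbound

/-- Remark 2 of the paper: a sufficient criterion for hypothesis (H2). If `Q` is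
`B`-geometrically ergodic with `B ⊆ L³(ν)` continuously, `ξ ∈ B`, and `B₂` is a Banach
space containing the products of elements of `B`, on which `Q` is geometrically ergodic
and whose norm dominates the `L^{3/2}(ν)`-norm, then `Σ_p ν(|Q^p ψ|^{3/2})^{2/3} < ∞`. -/
theorem stmt_17
    {E : Type*} [MeasurableSpace E]
    (Q : ProbabilityTheory.Kernel E E) [ProbabilityTheory.IsMarkovKernel Q]
    (ν : Measure E) [IsProbabilityMeasure ν]
    (hinv : ν.bind (fun x => Q x) = ν)
    -- the action of `Q` on real functions
    (Qop : (E → ℝ) → E → ℝ) (hQop : ∀ f x, Qop f x = ∫ y, f y ∂(Q x))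
    -- (i) the Banach space `B` of measurable functions, with `𝟏 ∈ B`, `B ⊆ L³(ν)`
    -- continuously, `Q ∈ 𝓛(B)`, and `Q` `B`-geometrically ergodic
    {B : Type*} [NormedAddCommGroup B] [NormedSpace ℂ B] [CompleteSpace B]
    (ι : B →ₗ[ℂ] (E → ℂ)) (hιinj : Function.Injective ι)
    (hιmeas : ∀ f : B, Measurable (ι f))
    (one : B) (hone : ι one = fun _ => 1)
    (hL3 : ∀ f : B, MemLp (ι f) 3 ν)
    (K : ℝ) (hK : ∀ f : B, (∫ x, ‖ι f x‖ ^ 3 ∂ν) ^ ((1 : ℝ) / 3) ≤ K * ‖f‖)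
    (QB : B →L[ℂ] B) (hQB : ∀ f : B, ι (QB f) = fun x => ∫ y, ι f y ∂(Q x))
    (C κ₀ : ℝ) (hC : 0 ≤ C) (hκ₀0 : 0 ≤ κ₀) (hκ₀1 : κ₀ < 1)
    (herg : ∀ n : ℕ, 1 ≤ n → ∀ f : B,
      ‖(QB ^ n) f - (∫ x, ι f x ∂ν) • one‖ ≤ C * κ₀ ^ n * ‖f‖)
    -- (ii) `ξ ∈ B` real-valued with `ν(ξ) = 0`, `ξ̌ = Σ Qⁿξ` converging absolutely in `B`,
    -- and the associated `σ²` and `ψ`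
    (ξB : B) (ξ : E → ℝ) (hξ : ∀ x, ι ξB x = (ξ x : ℂ)) (hξν : ∫ x, ξ x ∂ν = 0)
    (hsum : Summable fun n => ‖(QB ^ n) ξB‖)
    (ξcB : B) (hξcB : HasSum (fun n => (QB ^ n) ξB) ξcB)
    (ξc : E → ℝ) (hξc : ∀ x, ι ξcB x = (ξc x : ℂ))
    (σ2 : ℝ) (hσ2 : σ2 = (∫ x, ξc x ^ 2 ∂ν) - ∫ x, Qop ξc x ^ 2 ∂ν)
    (ψ : E → ℝ) (hψ : ∀ x, ψ x = Qop (fun y => ξc y ^ 2) x - Qop ξc x ^ 2 - σ2)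
    -- (iii) the Banach space `B₂`, continuously embedded in `L¹(ν)`, containing the
    -- products of elements of `B`, with `Q ∈ 𝓛(B₂)` `B₂`-geometrically ergodic, and whose
    -- norm dominates the `L^{3/2}(ν)` norm
    {B₂ : Type*} [NormedAddCommGroup B₂] [NormedSpace ℂ B₂] [CompleteSpace B₂]
    (ι₂ : B₂ →ₗ[ℂ] (E → ℂ)) (hι₂inj : Function.Injective ι₂)
    (hι₂meas : ∀ f : B₂, Measurable (ι₂ f))
    (one₂ : B₂) (hone₂ : ι₂ one₂ = fun _ => 1)
    (hL1 : ∀ f : B₂, Integrable (ι₂ f) ν)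
    (K₂ : ℝ) (hK₂ : ∀ f : B₂, (∫ x, ‖ι₂ f x‖ ∂ν) ≤ K₂ * ‖f‖)
    (hprod : ∀ g h : B, ∃ p : B₂, ι₂ p = fun x => ι g x * ι h x)
    (QB₂ : B₂ →L[ℂ] B₂) (hQB₂ : ∀ f : B₂, ι₂ (QB₂ f) = fun x => ∫ y, ι₂ f y ∂(Q x))
    (C₂ κ₂ : ℝ) (hC₂ : 0 ≤ C₂) (hκ₂0 : 0 ≤ κ₂) (hκ₂1 : κ₂ < 1)
    (herg₂ : ∀ n : ℕ, 1 ≤ n → ∀ f : B₂,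
      ‖(QB₂ ^ n) f - (∫ x, ι₂ f x ∂ν) • one₂‖ ≤ C₂ * κ₂ ^ n * ‖f‖)
    (A : ℝ) (hA : 0 < A)
    (hA32 : ∀ f : B₂, (∫ x, ‖ι₂ f x‖ ^ (3 / 2 : ℝ) ∂ν) ^ (2 / 3 : ℝ) ≤ A * ‖f‖) :
    Summable fun p => (∫ x, |Qop^[p] ψ x| ^ (3 / 2 : ℝ) ∂ν) ^ (2 / 3 : ℝ) :=
  stmt_17_general Q ν hinv Qop hQop ι QB hQB ξcB ξc hξc σ2 hσ2 ψ hψ ι₂ one₂ hone₂ hL1 hprod QB₂ hQB₂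
    C₂ κ₂ hκ₂0 hκ₂1 herg₂ A hA32
end
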